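/- Let d ≥ 1 and T > 0. Let H₀, H₁ be Hermitian d×d complex matrices, let f : ℝ → ℝ be continuous, and let D be a linear superoperator on d×d complex matrices. Define the time-dependent generator L_t(A) = −i((H₀ + f(t)·H₁)·A − A·(H₀ + f(t)·H₁)) + D(A) and the schedule-independent generator L(A) = −i(H₀·A − A·H₀) + D(A). Let ρ : ℝ → Matrix (Fin d) (Fin d) ℂ be differentiable with ρ'(t) = L_t(ρ(t)) and ‖ρ(t)‖₁ = 1 for all t ∈ [0,T], and suppose the initial state ρ₀ = ρ(0) commutes with H₁. If C > 0 is a constant satisfying ‖L(A)‖₁ ≤ C·‖A‖₁ for all matrices A, then T ≥ ‖ρ(T) − ρ₀‖₁ / C. -/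

import Mathlib

open Matrix
open scoped ComplexOrder

/- Matrices are equipped with the Frobenius norm so that curves of matrices can be
differentiated; the statement itself is phrased via the trace norm defined below. -/
attribute [local instance] Matrix.frobeniusNormedAddCommGroup Matrix.frobeniusNormedSpace

/-- Trace norm (Schatten 1-norm): `‖A‖₁ = Tr √(Aᴴ A)`. -/
noncomputable def traceNorm {d : ℕ} (A : Matrix (Fin d) (Fin d) ℂ) : ℝ :=
  (((Matrix.posSemidef_conjTranspose_mul_self A).1.eigenvectorUnitary.1 *
      diagonal (((↑) : ℝ → ℂ) ∘ (√·) ∘ (Matrix.posSemidef_conjTranspose_mul_self A).1.eigenvalues) *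
      (star (Matrix.posSemidef_conjTranspose_mul_self A).1.eigenvectorUnitary :
        Matrix (Fin d) (Fin d) ℂ)).trace).re

/-!
Pass to the interaction picture of the control Hamiltonian: with `U θ = exp (i θ H₁)` and
`g t = ∫₀ᵗ f`, the curve `σ t = U (g t) ρ(t) U (-g t)` satisfies `σ' = U L(ρ) U⁻¹`, because the
schedule-dependent term `f(t) [H₁, ρ]` cancels. The trace norm is unitarily invariant, so
`‖σ'(t)‖₁ ≤ C ‖ρ(t)‖₁ = C`; and since `ρ₀` commutes with `H₁`, `σ 0 = ρ₀` and
`σ T - σ 0 = U (ρ(T) - ρ₀) U⁻¹`. A mean value inequality for the trace norm then gives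
`‖ρ(T) - ρ₀‖₁ ≤ C T`. Unitary invariance and the mean value inequality both come from the duality
`‖X‖₁ = max {Re Tr (W X) : ‖W‖ ≤ 1}`, the maximum being attained at the polar part of `X`.
-/

attribute [local instance] Matrix.frobeniusNormedRing Matrix.frobeniusNormedAlgebra

section Exponential

open NormedSpace

variable {𝔸 : Type*} [NormedRing 𝔸] [NormedAlgebra ℝ 𝔸] [CompleteSpace 𝔸]

lemma hasDerivAt_exp_smul_mul_mul_exp_neg_smul (A : 𝔸) {g : ℝ → ℝ} {ρ : ℝ → 𝔸} {g' t : ℝ}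
    {ρ' : 𝔸} (hg : HasDerivAt g g' t) (hρ : HasDerivAt ρ ρ' t) :
    HasDerivAt (fun s => exp (g s • A) * ρ s * exp (-g s • A))
      (exp (g t • A) * (ρ' + g' • (A * ρ t - ρ t * A)) * exp (-g t • A)) t := by
  have hE : HasDerivAt (fun s => exp (g s • A)) (g' • (exp (g t • A) * A)) t :=
    (hasDerivAt_exp_smul_const A (g t)).scomp t hg
  have hE' : HasDerivAt (fun s => exp (-g s • A)) ((-g') • (A * exp (-g t • A))) t :=
    (hasDerivAt_exp_smul_const' A (-g t)).scomp (h := fun s => -g s) t hg.neg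
  convert (hE.mul hρ).mul hE' using 1
  · rfl
  simp only [Pi.mul_apply, smul_mul_assoc, mul_smul_comm, mul_add, add_mul, mul_sub, sub_mul,
    mul_assoc, neg_smul, mul_neg, smul_sub]
  abel

end Exponential

namespace Matrix

variable {n : Type*} [Fintype n]

/-- `W Wᴴ ≤ 1` in the Loewner order, i.e. `W` has operator norm at most `1`. -/
def IsContraction [DecidableEq n] (W : Matrix n n ℂ) : Prop :=
  (1 - W * Wᴴ).PosSemidef

lemma IsContraction.unitary_mul_mul [DecidableEq n] {W U V : Matrix n n ℂ} (hW : W.IsContraction)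
    (hU : U ∈ unitaryGroup n ℂ) (hV : V ∈ unitaryGroup n ℂ) : (U * W * V).IsContraction := by
  have hUU : U * Uᴴ = 1 := mem_unitaryGroup_iff.mp hU
  have hVV : V * Vᴴ = 1 := mem_unitaryGroup_iff.mp hV
  have h : 1 - U * W * V * (U * W * V)ᴴ = U * (1 - W * Wᴴ) * Uᴴ := by
    simp only [conjTranspose_mul, Matrix.mul_sub, Matrix.sub_mul, Matrix.mul_one, hUU]
    rw [show U * W * V * (Vᴴ * (Wᴴ * Uᴴ)) = U * W * (V * Vᴴ) * Wᴴ * Uᴴ by noncomm_ring, hVV]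
    noncomm_ring
  unfold IsContraction
  rw [h]
  exact hW.mul_mul_conjTranspose_same U

lemma sum_norm_sq_eq_re_mul_conjTranspose_apply (M : Matrix n n ℂ) (i : n) :
    ∑ k, ‖M i k‖ ^ 2 = ((M * Mᴴ) i i).re := by
  simp [mul_apply, Complex.re_sum, Complex.mul_conj, Complex.normSq_eq_norm_sq, -Complex.ofReal_pow]

lemma sum_norm_sq_eq_re_conjTranspose_mul_apply (N : Matrix n n ℂ) (j : n) :
    ∑ k, ‖N k j‖ ^ 2 = ((Nᴴ * N) j j).re := by
  simp [mul_apply, Complex.re_sum, Complex.conj_mul', ← Complex.ofReal_pow]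

lemma IsContraction.sum_norm_sq_le_one [DecidableEq n] {W : Matrix n n ℂ}
    (hW : W.IsContraction) (i : n) : ∑ k, ‖W i k‖ ^ 2 ≤ 1 := by
  have h := (Complex.le_def.mp (hW.diag_nonneg (i := i))).1
  simp only [sub_apply, one_apply_eq, Complex.zero_re, Complex.sub_re, Complex.one_re] at h
  rw [sum_norm_sq_eq_re_mul_conjTranspose_apply]
  linarith

lemma norm_mul_apply_sq_le (M N : Matrix n n ℂ) (i j : n) :
    ‖(M * N) i j‖ ^ 2 ≤ (∑ k, ‖M i k‖ ^ 2) * ∑ k, ‖N k j‖ ^ 2 := by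
  calc ‖(M * N) i j‖ ^ 2 ≤ (∑ k, ‖M i k‖ * ‖N k j‖) ^ 2 := by
        gcongr
        exact (norm_sum_le _ _).trans_eq (by simp only [norm_mul])
    _ ≤ _ := Finset.sum_mul_sq_le_sq_mul_sq _ _ _

section Gram

variable [DecidableEq n]

noncomputable def gramEigenbasis (A : Matrix n n ℂ) : Matrix n n ℂ :=
  (posSemidef_conjTranspose_mul_self A).1.eigenvectorUnitary

noncomputable def gramEigenvalues (A : Matrix n n ℂ) : n → ℝ :=
  (posSemidef_conjTranspose_mul_self A).1.eigenvalues

lemma gramEigenbasis_mem_unitaryGroup (A : Matrix n n ℂ) : gramEigenbasis A ∈ unitaryGroup n ℂ :=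
  (posSemidef_conjTranspose_mul_self A).1.eigenvectorUnitary.2

lemma conjTranspose_mul_self_mul_gramEigenbasis (A : Matrix n n ℂ) :
    (A * gramEigenbasis A)ᴴ * (A * gramEigenbasis A) =
      diagonal (fun i => (gramEigenvalues A i : ℂ)) := by
  have h := (posSemidef_conjTranspose_mul_self A).1.conjStarAlgAut_star_eigenvectorUnitary
  rw [Unitary.conjStarAlgAut_star_apply] at h
  rw [conjTranspose_mul]
  convert h using 1
  · simp only [gramEigenbasis, star_eq_conjTranspose, Matrix.mul_assoc]
  · rfl

end Gram

section OneParamUnitary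

variable [DecidableEq n]

noncomputable def oneParamUnitary (H : Matrix n n ℂ) (θ : ℝ) : Matrix n n ℂ :=
  NormedSpace.exp (θ • (Complex.I • H))

lemma oneParamUnitary_mem_unitaryGroup {H : Matrix n n ℂ} (hH : H.IsHermitian) (θ : ℝ) :
    oneParamUnitary H θ ∈ unitaryGroup n ℂ := by
  refine NormedSpace.exp_mem_unitary_of_mem_skewAdjoint (skewAdjoint.smul_mem θ ?_)
  rw [skewAdjoint.mem_iff, star_smul, Complex.star_def, Complex.conj_I, hH.star_eq, neg_smul]

@[simp]
lemma oneParamUnitary_zero (H : Matrix n n ℂ) : oneParamUnitary H 0 = 1 := by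
  simp [oneParamUnitary]

lemma oneParamUnitary_mul_neg (H : Matrix n n ℂ) (θ : ℝ) :
    oneParamUnitary H θ * oneParamUnitary H (-θ) = 1 := by
  have h : Commute (θ • (Complex.I • H)) (-θ • (Complex.I • H)) :=
    ((Commute.refl _).smul_left θ).smul_right (-θ)
  rw [oneParamUnitary, oneParamUnitary, ← Matrix.exp_add_of_commute _ _ h, ← add_smul,
    add_neg_cancel, zero_smul, NormedSpace.exp_zero]

lemma oneParamUnitary_mul_mul_neg_of_commute {A H : Matrix n n ℂ} (h : Commute A H) (θ : ℝ) :
    oneParamUnitary H θ * A * oneParamUnitary H (-θ) = A := by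
  have hA : Commute A (oneParamUnitary H θ) := ((h.smul_right Complex.I).smul_right θ).exp_right
  rw [← hA.eq, Matrix.mul_assoc, oneParamUnitary_mul_neg, Matrix.mul_one]

lemma hasDerivAt_oneParamUnitary_conj {H₀ H₁ Y : Matrix n n ℂ} {g : ℝ → ℝ}
    {ρ : ℝ → Matrix n n ℂ} {c t : ℝ} (hg : HasDerivAt g c t)
    (hρ : HasDerivAt ρ
      ((-Complex.I) • ((H₀ + (c : ℂ) • H₁) * ρ t - ρ t * (H₀ + (c : ℂ) • H₁)) + Y) t) :
    HasDerivAt (fun s => oneParamUnitary H₁ (g s) * ρ s * oneParamUnitary H₁ (-g s))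
      (oneParamUnitary H₁ (g t) * ((-Complex.I) • (H₀ * ρ t - ρ t * H₀) + Y) *
        oneParamUnitary H₁ (-g t)) t := by
  have h := hasDerivAt_exp_smul_mul_mul_exp_neg_smul (Complex.I • H₁) hg hρ
  have hframe : (-Complex.I) • ((H₀ + (c : ℂ) • H₁) * ρ t - ρ t * (H₀ + (c : ℂ) • H₁)) + Y
      + c • (Complex.I • H₁ * ρ t - ρ t * (Complex.I • H₁)) =
        (-Complex.I) • (H₀ * ρ t - ρ t * H₀) + Y := by
    simp only [RCLike.real_smul_eq_coe_smul (K := ℂ), smul_mul_assoc, mul_smul_comm, add_mul,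
      mul_add, smul_add, smul_sub, smul_smul]
    module
  rwa [hframe] at h

end OneParamUnitary

end Matrix

variable {d : ℕ}

lemma traceNorm_eq_sum_sqrt_gramEigenvalues (A : Matrix (Fin d) (Fin d) ℂ) :
    traceNorm A = ∑ i, √(gramEigenvalues A i) := by
  rw [traceNorm, trace_mul_cycle, UnitaryGroup.star_mul_self, one_mul]
  simp [gramEigenvalues, trace_diagonal, Complex.re_sum]

lemma abs_re_trace_mul_le_traceNorm {W : Matrix (Fin d) (Fin d) ℂ} (hW : W.IsContraction)
    (Y : Matrix (Fin d) (Fin d) ℂ) : |(W * Y).trace.re| ≤ traceNorm Y := by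
  set u := gramEigenbasis Y
  have hu := gramEigenbasis_mem_unitaryGroup Y
  set M := star u * W
  set N := Y * u
  have hM : M.IsContraction := by
    simpa using hW.unitary_mul_mul (Unitary.star_mem hu) (one_mem _)
  have htrace : (W * Y).trace = (M * N).trace := by
    rw [show M * N = star u * (W * Y) * u by simp only [M, N]; noncomm_ring,
      trace_mul_cycle, mem_unitaryGroup_iff.mp hu, one_mul]
  have hdiag (i : Fin d) : ‖(M * N) i i‖ ≤ √(gramEigenvalues Y i) := by
    have hcol : ∑ k, ‖N k i‖ ^ 2 = gramEigenvalues Y i := by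
      rw [sum_norm_sq_eq_re_conjTranspose_mul_apply, conjTranspose_mul_self_mul_gramEigenbasis,
        diagonal_apply_eq, Complex.ofReal_re]
    refine Real.le_sqrt_of_sq_le ((norm_mul_apply_sq_le M N i i).trans ?_)
    rw [hcol]
    exact mul_le_of_le_one_left (hcol ▸ by positivity) (hM.sum_norm_sq_le_one i)
  calc |(W * Y).trace.re| ≤ ‖(M * N).trace‖ := htrace ▸ Complex.abs_re_le_norm _
    _ ≤ ∑ i, ‖(M * N) i i‖ := norm_sum_le _ _
    _ ≤ ∑ i, √(gramEigenvalues Y i) := Finset.sum_le_sum fun i _ => hdiag i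
    _ = traceNorm Y := (traceNorm_eq_sum_sqrt_gramEigenvalues Y).symm

lemma exists_isContraction_re_trace_mul_eq_traceNorm (X : Matrix (Fin d) (Fin d) ℂ) :
    ∃ W : Matrix (Fin d) (Fin d) ℂ, W.IsContraction ∧ (W * X).trace.re = traceNorm X := by
  set u := gramEigenbasis X
  set N := X * u
  set μ := gramEigenvalues X
  -- `u G Nᴴ` is the partial isometry in the polar decomposition of `X`: `G` inverts `√(Nᴴ N)`
  -- on its support and vanishes on its kernel, as `(√0)⁻¹ = 0`
  set G := diagonal fun i => (((√(μ i))⁻¹ : ℝ) : ℂ)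
  have hN : Nᴴ * N = diagonal fun i => (μ i : ℂ) := conjTranspose_mul_self_mul_gramEigenbasis X
  have hGG : G * Nᴴ * (G * Nᴴ)ᴴ = diagonal fun i => ((√(μ i) / √(μ i) : ℝ) : ℂ) := by
    rw [conjTranspose_mul G Nᴴ, conjTranspose_conjTranspose,
      show G * Nᴴ * (N * Gᴴ) = G * (Nᴴ * N) * Gᴴ by noncomm_ring, hN, diagonal_conjTranspose,
      diagonal_mul_diagonal, diagonal_mul_diagonal]
    congr 1
    ext i
    rw [Pi.star_apply, Complex.star_def, Complex.conj_ofReal, ← Complex.ofReal_mul,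
      ← Complex.ofReal_mul, inv_mul_eq_div, Real.div_sqrt, div_eq_mul_inv]
  have hW₀ : (G * Nᴴ).IsContraction := by
    rw [IsContraction, hGG, ← diagonal_one, diagonal_sub, posSemidef_diagonal_iff]
    intro i
    rw [← Complex.ofReal_one, ← Complex.ofReal_sub, Complex.zero_le_real, sub_nonneg]
    exact div_self_le_one _
  refine ⟨u * (G * Nᴴ), ?_, ?_⟩
  · simpa using hW₀.unitary_mul_mul (gramEigenbasis_mem_unitaryGroup X) (one_mem _)
  have hcycle : (u * (G * Nᴴ) * X).trace = (G * (Nᴴ * N)).trace := by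
    rw [Matrix.mul_assoc, trace_mul_comm]
    simp only [N, Matrix.mul_assoc]
  rw [hcycle, hN, diagonal_mul_diagonal, trace_diagonal, traceNorm_eq_sum_sqrt_gramEigenvalues,
    Complex.re_sum]
  refine Finset.sum_congr rfl fun i _ => ?_
  rw [← Complex.ofReal_mul, Complex.ofReal_re, mul_comm, ← div_eq_mul_inv, Real.div_sqrt]

lemma traceNorm_unitary_mul_mul_le {U V : Matrix (Fin d) (Fin d) ℂ}
    (hU : U ∈ unitaryGroup (Fin d) ℂ) (hV : V ∈ unitaryGroup (Fin d) ℂ)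
    (A : Matrix (Fin d) (Fin d) ℂ) :
    traceNorm (U * A * V) ≤ traceNorm A := by
  obtain ⟨W, hW, hWeq⟩ := exists_isContraction_re_trace_mul_eq_traceNorm (U * A * V)
  have hcycle : (W * (U * A * V)).trace = (V * W * U * A).trace := by
    rw [← Matrix.mul_assoc, trace_mul_comm]; noncomm_ring
  rw [← hWeq, hcycle]
  exact (le_abs_self _).trans (abs_re_trace_mul_le_traceNorm (hW.unitary_mul_mul hV hU) A)

lemma traceNorm_unitary_mul_mul {U V : Matrix (Fin d) (Fin d) ℂ}
    (hU : U ∈ unitaryGroup (Fin d) ℂ) (hV : V ∈ unitaryGroup (Fin d) ℂ)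
    (A : Matrix (Fin d) (Fin d) ℂ) :
    traceNorm (U * A * V) = traceNorm A := by
  refine (traceNorm_unitary_mul_mul_le hU hV A).antisymm ?_
  have h := traceNorm_unitary_mul_mul_le (Unitary.star_mem hU) (Unitary.star_mem hV) (U * A * V)
  rwa [show star U * (U * A * V) * star V = (star U * U) * A * (V * star V) by noncomm_ring,
    mem_unitaryGroup_iff'.mp hU, mem_unitaryGroup_iff.mp hV, one_mul, Matrix.mul_one] at h

lemma traceNorm_sub_le_of_hasDerivWithinAt {σ σ' : ℝ → Matrix (Fin d) (Fin d) ℂ} {a b C : ℝ}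
    (hab : a ≤ b) (hσ : ∀ t ∈ Set.Icc a b, HasDerivWithinAt σ (σ' t) (Set.Icc a b) t)
    (hbound : ∀ t ∈ Set.Ico a b, traceNorm (σ' t) ≤ C) :
    traceNorm (σ b - σ a) ≤ C * (b - a) := by
  obtain ⟨W, hW, hWeq⟩ := exists_isContraction_re_trace_mul_eq_traceNorm (σ b - σ a)
  -- `X ↦ Re Tr (W X)` attains the trace norm of the difference and is `1`-Lipschitz for it
  let φ : Matrix (Fin d) (Fin d) ℂ →ₗ[ℝ] ℝ :=
    Complex.reLm.comp
      (((traceLinearMap (Fin d) ℂ ℂ).comp (LinearMap.mulLeft ℂ W)).restrictScalars ℝ)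
  have hφ (X : Matrix (Fin d) (Fin d) ℂ) : φ X = (W * X).trace.re := rfl
  have hmvt := norm_image_sub_le_of_norm_deriv_le_segment' (f := φ ∘ σ)
    (fun t ht => φ.toContinuousLinearMap.hasFDerivAt.comp_hasDerivWithinAt t (hσ t ht))
    (fun t ht => (abs_re_trace_mul_le_traceNorm hW _).trans (hbound t ht)) b ⟨hab, le_rfl⟩
  calc traceNorm (σ b - σ a) = φ (σ b) - φ (σ a) := by rw [← map_sub, hφ, hWeq]
    _ ≤ ‖φ (σ b) - φ (σ a)‖ := le_abs_self _
    _ ≤ C * (b - a) := hmvt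

theorem annealing_speed_limit_general (d : ℕ) (T : ℝ) (hT : 0 < T)
    (H₀ H₁ : Matrix (Fin d) (Fin d) ℂ) (hH₁ : H₁.IsHermitian)
    (f : ℝ → ℝ) (hf : Continuous f)
    (D : Matrix (Fin d) (Fin d) ℂ →ₗ[ℂ] Matrix (Fin d) (Fin d) ℂ)
    (ρ : ℝ → Matrix (Fin d) (Fin d) ℂ)
    (hρ : ∀ t ∈ Set.Icc (0 : ℝ) T, HasDerivAt ρ
      ((-Complex.I) • ((H₀ + (f t : ℂ) • H₁) * ρ t - ρ t * (H₀ + (f t : ℂ) • H₁))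
        + D (ρ t)) t)
    (hρnorm : ∀ t ∈ Set.Icc (0 : ℝ) T, traceNorm (ρ t) = 1)
    (hcomm : ρ 0 * H₁ = H₁ * ρ 0)
    (C : ℝ) (hC : 0 < C)
    (hCbound : ∀ A : Matrix (Fin d) (Fin d) ℂ,
      traceNorm ((-Complex.I) • (H₀ * A - A * H₀) + D A) ≤ C * traceNorm A) :
    traceNorm (ρ T - ρ 0) / C ≤ T := by
  set g : ℝ → ℝ := fun t => ∫ s in (0 : ℝ)..t, f s
  set U := oneParamUnitary H₁
  set L : Matrix (Fin d) (Fin d) ℂ → Matrix (Fin d) (Fin d) ℂ :=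
    fun A => (-Complex.I) • (H₀ * A - A * H₀) + D A
  have hU := oneParamUnitary_mem_unitaryGroup hH₁
  have hσ : ∀ t ∈ Set.Icc 0 T, HasDerivWithinAt (fun s => U (g s) * ρ s * U (-g s))
      (U (g t) * L (ρ t) * U (-g t)) (Set.Icc 0 T) t := fun t ht =>
    (hasDerivAt_oneParamUnitary_conj (hf.integral_hasStrictDerivAt 0 t).hasDerivAt
      (hρ t ht)).hasDerivWithinAt
  have hbound : ∀ t ∈ Set.Ico 0 T, traceNorm (U (g t) * L (ρ t) * U (-g t)) ≤ C := by
    intro t ht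
    rw [traceNorm_unitary_mul_mul (hU _) (hU _)]
    calc traceNorm (L (ρ t)) ≤ C * traceNorm (ρ t) := hCbound (ρ t)
      _ = C := by rw [hρnorm t (Set.Ico_subset_Icc_self ht), mul_one]
  have hσT : U (g T) * ρ T * U (-g T) - U (g 0) * ρ 0 * U (-g 0) =
      U (g T) * (ρ T - ρ 0) * U (-g T) := by
    simp only [g, intervalIntegral.integral_same, neg_zero, U, oneParamUnitary_zero, one_mul,
      Matrix.mul_one, Matrix.mul_sub, Matrix.sub_mul, oneParamUnitary_mul_mul_neg_of_commute hcomm]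
  rw [div_le_iff₀ hC]
  calc traceNorm (ρ T - ρ 0)
      = traceNorm (U (g T) * ρ T * U (-g T) - U (g 0) * ρ 0 * U (-g 0)) := by
        rw [hσT, traceNorm_unitary_mul_mul (hU _) (hU _)]
    _ ≤ C * (T - 0) := traceNorm_sub_le_of_hasDerivWithinAt
          (σ := fun s => U (g s) * ρ s * U (-g s)) hT.le hσ hbound
    _ = T * C := by ring

/-- schedule-independent annealing speed limit, Eq. (10) of the paper.
For the annealing generator `L_t(A) = −i[(H₀ + f(t)H₁), A] + D(A)` and the
schedule-independent generator `L(A) = −i[H₀, A] + D(A)`: if `ρ` solves `ρ' = L_t ρ` on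
`[0,T]` with `‖ρ(t)‖₁ = 1`, the initial state `ρ₀ = ρ(0)` commutes with the control
Hamiltonian `H₁`, and `C > 0` satisfies `‖L(A)‖₁ ≤ C‖A‖₁` for all `A`, then
`T ≥ ‖ρ(T) − ρ₀‖₁ / C`. -/
theorem annealing_speed_limit (d : ℕ) (hd : 1 ≤ d) (T : ℝ) (hT : 0 < T)
    (H₀ H₁ : Matrix (Fin d) (Fin d) ℂ) (hH₀ : H₀.IsHermitian) (hH₁ : H₁.IsHermitian)
    (f : ℝ → ℝ) (hf : Continuous f)
    (D : Matrix (Fin d) (Fin d) ℂ →ₗ[ℂ] Matrix (Fin d) (Fin d) ℂ)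
    (ρ : ℝ → Matrix (Fin d) (Fin d) ℂ)
    (hρ : ∀ t ∈ Set.Icc (0 : ℝ) T, HasDerivAt ρ
      ((-Complex.I) • ((H₀ + (f t : ℂ) • H₁) * ρ t - ρ t * (H₀ + (f t : ℂ) • H₁))
        + D (ρ t)) t)
    (hρnorm : ∀ t ∈ Set.Icc (0 : ℝ) T, traceNorm (ρ t) = 1)
    (hcomm : ρ 0 * H₁ = H₁ * ρ 0)
    (C : ℝ) (hC : 0 < C)
    (hCbound : ∀ A : Matrix (Fin d) (Fin d) ℂ,
      traceNorm ((-Complex.I) • (H₀ * A - A * H₀) + D A) ≤ C * traceNorm A) :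
    traceNorm (ρ T - ρ 0) / C ≤ T :=
  annealing_speed_limit_general d T hT H₀ H₁ hH₁ f hf D ρ hρ hρnorm hcomm C hC hCbound
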